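/- arXiv:2011.13510 — 6 statements merged into one kernel-verified Lean document; each statement's English description precedes it below -/
import Mathlib

section
/- Let V be a real inner product space, let T, F₁ ∈ V, let s ∈ {−1, 1}, and let τ > 0. Set Ŝ = −τ s T and Ŷ = F₁ − T, and define the first Riemannian Barzilai–Borwein parameter τ^{RBB1} = s ⟨Ŝ, Ŝ⟩ / ⟨Ŝ, Ŷ⟩. If either (a) ⟨T, F₁⟩ < 0, or (b) ⟨T, F₁⟩ > 0 and ‖F₁‖ < ‖T‖, then ⟨Ŝ, Ŷ⟩ ≠ 0 and τ^{RBB1} > 0. -/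
open scoped RealInnerProductSpace

theorem rbb1_pos
    {V : Type*} [NormedAddCommGroup V] [InnerProductSpace ℝ V]
    (T F₁ : V) (s : ℝ) (hs : s = -1 ∨ s = 1) (τ : ℝ) (hτ : 0 < τ)
    (S Y : V) (hS : S = (-(τ * s)) • T) (hY : Y = F₁ - T)
    (hcase : ⟪T, F₁⟫ < 0 ∨ (0 < ⟪T, F₁⟫ ∧ ‖F₁‖ < ‖T‖)) :
    ⟪S, Y⟫ ≠ 0 ∧ 0 < s * ⟪S, S⟫ / ⟪S, Y⟫ := by
  have hT0 : T ≠ 0 := by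
    intro h
    rcases hcase with h1 | ⟨h1, _⟩ <;> simp [h, inner_zero_left] at h1
  have hTn : 0 < ‖T‖ := norm_pos_iff.mpr hT0
  have hgap : ⟪T, F₁⟫ < ‖T‖ ^ 2 := by
    rcases hcase with h1 | ⟨h1, h2⟩
    · nlinarith [sq_nonneg ‖T‖]
    · nlinarith [real_inner_le_norm T F₁]
  have hSY : ⟪S, Y⟫ = -(τ * s) * (⟪T, F₁⟫ - ‖T‖ ^ 2) := by
    rw [hS, hY, real_inner_smul_left, inner_sub_right,
      real_inner_self_eq_norm_sq]
  have hSS : ⟪S, S⟫ = (τ * s) ^ 2 * ‖T‖ ^ 2 := by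
    rw [hS, real_inner_smul_left, real_inner_smul_right,
      real_inner_self_eq_norm_sq]
    ring
  rcases hs with h | h <;> subst h
  · constructor
    · rw [hSY]; nlinarith
    · rw [hSY, hSS]
      have h1 : (0:ℝ) < -(-1 * ((τ * -1) ^ 2 * ‖T‖ ^ 2)) := by
        have : (0:ℝ) < (τ * -1) ^ 2 * ‖T‖ ^ 2 := by positivity
        nlinarith
      have h2 : (0:ℝ) < -(-(τ * -1) * (⟪T, F₁⟫ - ‖T‖ ^ 2)) := by nlinarith
      calc (0:ℝ) < _ / _ := div_pos h1 h2
        _ = _ := by rw [neg_div_neg_eq]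
  · constructor
    · rw [hSY]; nlinarith
    · rw [hSY, hSS]
      apply div_pos
      · positivity
      · nlinarith
end

section
/- Let V be a real inner product space, let T, F₁ ∈ V, let s ∈ {−1, 1}, and let τ > 0. Set Ŝ = −τ s T and Ŷ = F₁ − T, and define the second Riemannian Barzilai–Borwein parameter τ^{RBB2} = s ⟨Ŝ, Ŷ⟩ / ⟨Ŷ, Ŷ⟩. If either (a) ⟨T, F₁⟩ < 0, or (b) ⟨T, F₁⟩ > 0 and ‖F₁‖ < ‖T‖, then Ŷ ≠ 0 and τ^{RBB2} > 0. -/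
open scoped RealInnerProductSpace

theorem rbb2_pos
    {V : Type*} [NormedAddCommGroup V] [InnerProductSpace ℝ V]
    (T F₁ : V) (s : ℝ) (hs : s = -1 ∨ s = 1) (τ : ℝ) (hτ : 0 < τ)
    (S Y : V) (hS : S = (-(τ * s)) • T) (hY : Y = F₁ - T)
    (hcase : ⟪T, F₁⟫ < 0 ∨ (0 < ⟪T, F₁⟫ ∧ ‖F₁‖ < ‖T‖)) :
    Y ≠ 0 ∧ 0 < s * ⟪S, Y⟫ / ⟪Y, Y⟫ := by
  have hs2 : s * s = 1 := by rcases hs with h | h <;> rw [h] <;> ring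
  have hTF : ⟪T, F₁⟫ < ‖T‖ ^ 2 := by
    rcases hcase with h | ⟨h1, h2⟩
    · exact lt_of_lt_of_le h (by positivity)
    · have hT : 0 < ‖T‖ := by
        rcases eq_or_lt_of_le (norm_nonneg T) with h | h
        · exfalso
          have : T = 0 := by simpa using h.symm
          simp [this] at h1
        · exact h
      calc ⟪T, F₁⟫ ≤ ‖T‖ * ‖F₁‖ := real_inner_le_norm T F₁
        _ < ‖T‖ * ‖T‖ := by nlinarith
        _ = ‖T‖ ^ 2 := by ring
  have hYne : Y ≠ 0 := by
    intro h
    have hFT : F₁ = T := by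
      have := sub_eq_zero.mp (hY ▸ h)
      exact this
    rw [hFT, real_inner_self_eq_norm_sq] at hTF
    exact lt_irrefl _ hTF
  have hnum : s * ⟪S, Y⟫ = τ * (‖T‖ ^ 2 - ⟪T, F₁⟫) := by
    rw [hS, hY, real_inner_smul_left, inner_sub_right, real_inner_self_eq_norm_sq]
    linear_combination τ * (‖T‖ ^ 2 - ⟪T, F₁⟫) * hs2
  have hden : 0 < ⟪Y, Y⟫ := by
    rw [real_inner_self_eq_norm_sq]
    have := norm_pos_iff.mpr hYne
    positivity
  refine ⟨hYne, div_pos ?_ hden⟩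
  rw [hnum]
  nlinarith
end

section
/- Let η ∈ [0,1), ρ₁ ∈ (0,1), ε₁ ∈ (0,1), and let f, τ, r : ℕ → ℝ be sequences with τ_k > 0 and r_k ≥ 0 for all k. Define Q, C : ℕ → ℝ by Q₀ = 1, C₀ = f₀, Q_{k+1} = η Q_k + 1, and C_{k+1} = (η Q_k C_k + f_{k+1})/Q_{k+1}. If the relaxed non-monotone condition f_{k+1} ≤ C_k − ρ₁ ε₁ τ_k r_k holds for all k ≥ 0, then f_k ≤ C_k for every k ≥ 0. -/
theorem zhang_hager_lower_bound
    (η ρ₁ ε₁ : ℝ) (hη : 0 ≤ η ∧ η < 1) (hρ₁ : 0 < ρ₁ ∧ ρ₁ < 1) (hε₁ : 0 < ε₁ ∧ ε₁ < 1)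
    (f τ r : ℕ → ℝ) (hτ : ∀ k, 0 < τ k) (hr : ∀ k, 0 ≤ r k)
    (Q C : ℕ → ℝ) (hQ0 : Q 0 = 1) (hC0 : C 0 = f 0)
    (hQ : ∀ k, Q (k + 1) = η * Q k + 1)
    (hC : ∀ k, C (k + 1) = (η * Q k * C k + f (k + 1)) / Q (k + 1))
    (hline : ∀ k, f (k + 1) ≤ C k - ρ₁ * ε₁ * τ k * r k) :
    ∀ k, f k ≤ C k := by
  have hQpos : ∀ k, 1 ≤ Q k := by
    intro k
    induction k with
    | zero => simp [hQ0]
    | succ n ih =>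
      rw [hQ n]
      nlinarith [hη.1]
  intro k
  cases k with
  | zero => simp [hC0]
  | succ n =>
    have hfC : f (n + 1) ≤ C n := by
      have := hline n
      nlinarith [mul_pos hρ₁.1 hε₁.1, hτ n, hr n,
        mul_nonneg (mul_nonneg (le_of_lt (mul_pos hρ₁.1 hε₁.1)) (le_of_lt (hτ n))) (hr n)]
    rw [hC n]
    rw [le_div_iff₀ (by linarith [hQpos (n+1)])]
    rw [hQ n]
    have hQn : 0 ≤ η * Q n := mul_nonneg hη.1 (by linarith [hQpos n])
    nlinarith
end

section
/- Let η ∈ [0,1), ρ₁ ∈ (0,1), ε₁ ∈ (0,1), and let f, τ, r : ℕ → ℝ be sequences with f_k ≥ 0, τ_k > 0 and r_k ≥ 0 for all k. Define Q, C : ℕ → ℝ by Q₀ = 1, C₀ = f₀, Q_{k+1} = η Q_k + 1, and C_{k+1} = (η Q_k C_k + f_{k+1})/Q_{k+1}. If f_{k+1} ≤ C_k − ρ₁ ε₁ τ_k r_k holds for all k ≥ 0, then the series Σ_{k=0}^{∞} (τ_k r_k)/Q_{k+1} converges; in fact Σ_{k=0}^{∞} ρ₁ ε₁ (τ_k r_k)/Q_{k+1}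 ≤ C₀ − inf_{k} C_k < ∞. -/
theorem zhang_hager_summable
    (η ρ₁ ε₁ : ℝ) (hη : 0 ≤ η ∧ η < 1) (hρ₁ : 0 < ρ₁ ∧ ρ₁ < 1) (hε₁ : 0 < ε₁ ∧ ε₁ < 1)
    (f τ r : ℕ → ℝ) (hf : ∀ k, 0 ≤ f k) (hτ : ∀ k, 0 < τ k) (hr : ∀ k, 0 ≤ r k)
    (Q C : ℕ → ℝ) (hQ0 : Q 0 = 1) (hC0 : C 0 = f 0)
    (hQ : ∀ k, Q (k + 1) = η * Q k + 1)
    (hC : ∀ k, C (k + 1) = (η * Q k * C k + f (k + 1)) / Q (k + 1))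
    (hline : ∀ k, f (k + 1) ≤ C k - ρ₁ * ε₁ * τ k * r k) :
    Summable (fun k => τ k * r k / Q (k + 1)) ∧
    ∑' k, ρ₁ * ε₁ * (τ k * r k) / Q (k + 1) ≤ C 0 - ⨅ k, C k := by
  obtain ⟨hη0, hη1⟩ := hη
  obtain ⟨hρ0, _⟩ := hρ₁
  obtain ⟨hε0, _⟩ := hε₁
  have hQpos : ∀ k, 0 < Q k := by
    intro k
    induction k with
    | zero => rw [hQ0]; norm_num
    | succ n ih => rw [hQ n]; positivity
  have hCnonneg : ∀ k, 0 ≤ C k := by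
    intro k
    induction k with
    | zero => rw [hC0]; exact hf 0
    | succ n ih =>
      rw [hC n]
      have h1 : 0 ≤ η * Q n * C n + f (n + 1) := by
        exact add_nonneg (mul_nonneg (mul_nonneg hη0 (hQpos n).le) ih) (hf (n + 1))
      exact div_nonneg h1 (hQpos (n + 1)).le
  -- telescoping key inequality
  have key : ∀ k, ρ₁ * ε₁ * (τ k * r k) / Q (k + 1) ≤ C k - C (k + 1) := by
    intro k
    have hQ1 := hQpos (k + 1)
    rw [div_le_iff₀ hQ1]
    have hmul : C (k + 1) * Q (k + 1) = η * Q k * C k + f (k + 1) := by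
      rw [hC k]; field_simp
    have hexp : (C k - C (k + 1)) * Q (k + 1) = C k - f (k + 1) := by
      rw [sub_mul, hmul, hQ k]; ring
    have := hline k
    linarith
  have hterm_nonneg : ∀ k, 0 ≤ ρ₁ * ε₁ * (τ k * r k) / Q (k + 1) := by
    intro k
    have := (hτ k).le
    have := hr k
    have := (hQpos (k + 1)).le
    positivity
  -- partial sums bound
  have hsum : ∀ n, ∑ k ∈ Finset.range n, ρ₁ * ε₁ * (τ k * r k) / Q (k + 1) ≤ C 0 - C n := by
    intro n
    induction n with
    | zero => simp
    | succ m ih =>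
      rw [Finset.sum_range_succ]
      have := key m
      linarith
  have hbdd : BddBelow (Set.range C) := ⟨0, fun x ⟨k, hk⟩ => hk ▸ hCnonneg k⟩
  have hsum2 : ∀ n, ∑ k ∈ Finset.range n, ρ₁ * ε₁ * (τ k * r k) / Q (k + 1) ≤ C 0 - ⨅ k, C k := by
    intro n
    have h := hsum n
    have : (⨅ k, C k) ≤ C n := ciInf_le hbdd n
    linarith
  have hsummable : Summable (fun k => ρ₁ * ε₁ * (τ k * r k) / Q (k + 1)) :=
    summable_of_sum_range_le hterm_nonneg hsum2
  constructor
  · have heq : (fun k => τ k * r k / Q (k + 1)) =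
        fun k => (ρ₁ * ε₁)⁻¹ * (ρ₁ * ε₁ * (τ k * r k) / Q (k + 1)) := by
      funext k
      field_simp
    rw [heq]
    exact hsummable.mul_left _
  · exact Summable.tsum_le_of_sum_range_le hsummable hsum2
end

section
/- Let η ∈ [0,1), ρ₁ ∈ (0,1), ε₁ ∈ (0,1), and let f, τ, r : ℕ → ℝ be sequences with f_k ≥ 0, τ_k > 0 and r_k ≥ 0 for all k. Define Q, C : ℕ → ℝ by Q₀ = 1, C₀ = f₀, Q_{k+1} = η Q_k + 1, and C_{k+1} = (η Q_k C_k + f_{k+1})/Q_{k+1}. If f_{k+1} ≤ C_k − ρ₁ ε₁ τ_k r_k holds for all k ≥ 0, then lim_{k→∞} τ_k r_k = 0. -/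
theorem zhang_hager_residual_tendsto_zero
    (η ρ₁ ε₁ : ℝ) (hη : 0 ≤ η ∧ η < 1) (hρ₁ : 0 < ρ₁ ∧ ρ₁ < 1) (hε₁ : 0 < ε₁ ∧ ε₁ < 1)
    (f τ r : ℕ → ℝ) (hf : ∀ k, 0 ≤ f k) (hτ : ∀ k, 0 < τ k) (hr : ∀ k, 0 ≤ r k)
    (Q C : ℕ → ℝ) (hQ0 : Q 0 = 1) (hC0 : C 0 = f 0)
    (hQ : ∀ k, Q (k + 1) = η * Q k + 1)
    (hC : ∀ k, C (k + 1) = (η * Q k * C k + f (k + 1)) / Q (k + 1))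
    (hline : ∀ k, f (k + 1) ≤ C k - ρ₁ * ε₁ * τ k * r k) :
    Filter.Tendsto (fun k => τ k * r k) Filter.atTop (nhds 0) := by
  obtain ⟨hη0, hη1⟩ := hη
  obtain ⟨hρ0, _⟩ := hρ₁
  obtain ⟨hε0, _⟩ := hε₁
  have h1η : 0 < 1 - η := by linarith
  -- Q k ≥ 1
  have hQ1 : ∀ k, 1 ≤ Q k := by
    intro k; induction k with
    | zero => simp [hQ0]
    | succ n ih => rw [hQ n]; nlinarith
  have hQpos : ∀ k, 0 < Q k := fun k => lt_of_lt_of_le one_pos (hQ1 k)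
  -- Q k ≤ 1/(1-η)
  have hQub : ∀ k, Q k ≤ 1 / (1 - η) := by
    intro k; induction k with
    | zero =>
      rw [hQ0, le_div_iff₀ h1η]; linarith
    | succ n ih =>
      have ih' : Q n * (1 - η) ≤ 1 := by rw [← le_div_iff₀ h1η]; exact ih
      rw [hQ n, le_div_iff₀ h1η]
      nlinarith
  -- C nonneg
  have hCnn : ∀ k, 0 ≤ C k := by
    intro k; induction k with
    | zero => rw [hC0]; exact hf 0
    | succ n ih =>
      rw [hC n]
      apply div_nonneg _ (hQpos (n+1)).le
      have h1 := hf (n+1)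
      have h2 : 0 ≤ η * Q n * C n := mul_nonneg (mul_nonneg hη0 (hQpos n).le) ih
      linarith
  -- step inequality: C (k+1) ≤ C k - ρ₁ε₁ τ r / Q(k+1)
  have hstep : ∀ k, C (k + 1) ≤ C k - ρ₁ * ε₁ * τ k * r k / Q (k + 1) := by
    intro k
    rw [hC k]
    have hq := hQpos (k+1)
    rw [div_le_iff₀ hq, sub_mul, div_mul_cancel₀ _ (ne_of_gt hq), hQ k]
    have := hline k
    nlinarith
  have hτr : ∀ k, 0 ≤ τ k * r k := fun k => mul_nonneg (hτ k).le (hr k)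
  -- C antitone
  have hanti : Antitone C := by
    apply antitone_nat_of_succ_le
    intro k
    have h := hstep k
    have : 0 ≤ ρ₁ * ε₁ * τ k * r k / Q (k + 1) := by
      apply div_nonneg _ (hQpos (k+1)).le
      exact mul_nonneg (mul_nonneg (mul_pos hρ0 hε0).le (hτ k).le) (hr k)
    linarith
  -- C converges
  have hbdd : BddBelow (Set.range C) := ⟨0, by rintro x ⟨k, rfl⟩; exact hCnn k⟩
  have hlim : Filter.Tendsto C Filter.atTop (nhds (⨅ k, C k)) :=
    tendsto_atTop_ciInf hanti hbdd
  have hlim' : Filter.Tendsto (fun k => C (k + 1)) Filter.atTop (nhds (⨅ k, C k)) :=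
    hlim.comp (Filter.tendsto_add_atTop_nat 1)
  set M : ℝ := 1 / ((1 - η) * (ρ₁ * ε₁)) with hM
  have hdiff : Filter.Tendsto (fun k => M * (C k - C (k + 1))) Filter.atTop (nhds 0) := by
    have := (hlim.sub hlim').const_mul M
    simpa using this
  -- squeeze
  apply squeeze_zero hτr _ hdiff
  intro k
  have h := hstep k
  have hq := hQpos (k+1)
  have hqub := hQub (k+1)
  have hρε : 0 < ρ₁ * ε₁ := mul_pos hρ0 hε0
  have h2 : ρ₁ * ε₁ * τ k * r k / Q (k + 1) ≤ C k - C (k + 1) := by linarith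
  have h3 : ρ₁ * ε₁ * (τ k * r k) * (1 - η) ≤ ρ₁ * ε₁ * τ k * r k / Q (k + 1) := by
    rw [le_div_iff₀ hq]
    have htr := hτr k
    have hs : 0 ≤ ρ₁ * ε₁ * (τ k * r k) := mul_nonneg hρε.le htr
    have hle : (1 - η) * Q (k+1) ≤ 1 := by
      have := mul_le_mul_of_nonneg_left hqub h1η.le
      rw [mul_one_div, div_self (ne_of_gt h1η)] at this
      exact this
    nlinarith [mul_le_mul_of_nonneg_left hle hs]
  have key : ρ₁ * ε₁ * (τ k * r k) * (1 - η) ≤ C k - C (k + 1) := le_trans h3 h2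
  have hMpos : 0 < (1 - η) * (ρ₁ * ε₁) := mul_pos h1η hρε
  rw [hM, one_div, inv_mul_eq_div, le_div_iff₀ hMpos]
  nlinarith [key]
end

section
/- Let Q ∈ ℝ^{n×p} satisfy QᵀQ = I_p, and let ξ ∈ ℝ^{n×p} be arbitrary. Set sym(W) = ½(W + Wᵀ) for W ∈ ℝ^{p×p}. Then ‖ξ − Q·sym(Qᵀξ)‖_F² = ‖ξ‖_F² − ‖sym(Qᵀξ)‖_F², and in particular ‖ξ − Q·sym(Qᵀξ)‖_F ≤ ‖ξ‖_F. -/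
open Matrix

attribute [local instance] Matrix.frobeniusNormedAddCommGroup

private lemma frob_sq {m n : ℕ} (A : Matrix (Fin m) (Fin n) ℝ) :
    ‖A‖ ^ 2 = (Aᵀ * A).trace := by
  have h := Matrix.frobenius_norm_def A
  have hnn : (0 : ℝ) ≤ ∑ i, ∑ j, ‖A i j‖ ^ (2 : ℝ) :=
    Finset.sum_nonneg fun i _ => Finset.sum_nonneg fun j _ =>
      Real.rpow_nonneg (norm_nonneg _) _
  have : ‖A‖ ^ 2 = ∑ i, ∑ j, ‖A i j‖ ^ (2 : ℝ) := by
    rw [h, ← Real.rpow_natCast _ 2, ← Real.rpow_mul hnn]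
    norm_num
  rw [this, Matrix.trace, Finset.sum_comm]
  simp [Matrix.diag, Matrix.mul_apply, Real.rpow_natCast, Real.norm_eq_abs, sq_abs, sq]

theorem stiefel_transport_nonexpansive
    {n p : ℕ} (Q : Matrix (Fin n) (Fin p) ℝ) (hQ : Qᵀ * Q = 1)
    (ξ : Matrix (Fin n) (Fin p) ℝ)
    (sym : Matrix (Fin p) (Fin p) ℝ → Matrix (Fin p) (Fin p) ℝ)
    (hsym : ∀ W, sym W = (1 / 2 : ℝ) • (W + Wᵀ)) :
    ‖ξ - Q * sym (Qᵀ * ξ)‖ ^ 2 = ‖ξ‖ ^ 2 - ‖sym (Qᵀ * ξ)‖ ^ 2 ∧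
    ‖ξ - Q * sym (Qᵀ * ξ)‖ ≤ ‖ξ‖ := by
  set S := sym (Qᵀ * ξ) with hS
  have hSsym : Sᵀ = S := by
    rw [hS, hsym]; simp [Matrix.transpose_smul, Matrix.transpose_add, add_comm]
  -- trace of S * (Qᵀ * ξ) equals trace of S * S
  have key : ((Qᵀ * ξ)ᵀ * S).trace = (Sᵀ * S).trace := by
    rw [hSsym]
    have hexp : S = (1 / 2 : ℝ) • ((Qᵀ * ξ) + (Qᵀ * ξ)ᵀ) := by rw [hS, hsym]
    set M := Qᵀ * ξ with hMdef
    have h1 : (M * Mᵀ).trace = (Mᵀ * M).trace := Matrix.trace_mul_comm _ _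
    have h2 : (Mᵀ * Mᵀ).trace = (M * M).trace := by
      rw [← Matrix.trace_transpose (Mᵀ * Mᵀ), Matrix.transpose_mul, Matrix.transpose_transpose]
    rw [hexp]
    simp only [Matrix.smul_mul, Matrix.mul_smul, Matrix.mul_add, Matrix.add_mul,
      Matrix.transpose_smul, Matrix.transpose_add, Matrix.transpose_transpose,
      Matrix.trace_smul, Matrix.trace_add, smul_eq_mul, h1, h2]
    ring
  have main : ‖ξ - Q * S‖ ^ 2 = ‖ξ‖ ^ 2 - ‖S‖ ^ 2 := by
    rw [frob_sq, frob_sq, frob_sq]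
    have expand : (ξ - Q * S)ᵀ * (ξ - Q * S)
        = ξᵀ * ξ - ξᵀ * (Q * S) - (Q * S)ᵀ * ξ + (Q * S)ᵀ * (Q * S) := by
      simp only [Matrix.transpose_sub, Matrix.sub_mul, Matrix.mul_sub]; abel
    rw [expand]
    have hQS : (Q * S)ᵀ * (Q * S) = Sᵀ * S := by
      rw [Matrix.transpose_mul, Matrix.mul_assoc, ← Matrix.mul_assoc Qᵀ Q S, hQ,
        Matrix.one_mul]
    have hcross1 : (ξᵀ * (Q * S)).trace = ((Qᵀ * ξ)ᵀ * S).trace := by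
      rw [Matrix.transpose_mul, Matrix.transpose_transpose, Matrix.mul_assoc]
    have hcross2 : ((Q * S)ᵀ * ξ).trace = ((Qᵀ * ξ)ᵀ * S).trace := by
      rw [← Matrix.trace_transpose ((Q * S)ᵀ * ξ), Matrix.transpose_mul,
        Matrix.transpose_transpose, ← hcross1]
    simp only [Matrix.trace_add, Matrix.trace_sub, hQS, hcross1, hcross2, key]
    ring
  refine ⟨main, ?_⟩
  have h1 : ‖ξ - Q * S‖ ^ 2 ≤ ‖ξ‖ ^ 2 := by
    rw [main]; nlinarith [sq_nonneg ‖S‖]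
  exact (pow_le_pow_iff_left₀ (norm_nonneg _) (norm_nonneg _) two_ne_zero).mp h1
end
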